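/- Let seg : ℤ be the base address of a memory segment, and consider an x64 memory operand whose effective address is seg + base + index·scale + disp, where base and index are natural numbers with base < 2^32 and index < 2^32 (only the lower 32 bits of the base and index registers are used), scale ∈ {1, 2, 4, 8}, and disp : ℤ satisfies −2^31 ≤ disp < 2^31. Then the effective address lies in the half-open interval [seg − 2^31, seg + 2^32 + 8·2^32 + 2^31), and hence in [seg − 2·2^30, seg + 38·2^30): the address can reach at most 2 GB below the segment base and strictly less than 38 GB above it. Consequently, if the segment consists of 4 GB of usable space followed by 36 GB of guard space above it and 2 GB of guard space below it, every such memory operand addresses within the segment's usable space or its guard space. -/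

import Mathlib

set_option autoImplicit false

theorem operand_offset_lt {base index scale B S : ℕ} {disp D : ℤ}
    (hbase : base < B) (hindex : index < B) (hscale : scale ≤ S) (hdisp : disp < D) :
    (base : ℤ) + index * scale + disp < B + S * B + D := by
  have hproduct : index * scale ≤ S * B := by
    rw [mul_comm S]
    exact Nat.mul_le_mul hindex.le hscale
  have : (index : ℤ) * scale ≤ S * B := by exact_mod_cast hproduct
  omega

theorem neg_le_operand_offset (base index scale : ℕ) {disp D : ℤ} (hdisp : -D ≤ disp) :
    -D ≤ (base : ℤ) + index * scale + disp := by
  have : (0 : ℤ) ≤ base + index * scale := by positivity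
  omega

/-- **Segment operand bounds.**  Let `seg : ℤ` be the base address of a
memory segment, and consider an x64 memory operand with effective
address `seg + base + index·scale + disp`, where `base, index < 2^32`
(only the lower 32 bits of the registers are used), `scale ∈ {1,2,4,8}`
and `disp` is a 32-bit signed constant.  Then the effective address
lies in `[seg − 2^31, seg + 2^32 + 8·2^32 + 2^31)`, hence in
`[seg − 2·2^30, seg + 38·2^30)`: at most 2 GB below the segment base
and strictly less than 38 GB above it.  Consequently, with 4 GB of
usable space, 36 GB of guard space above it and 2 GB of guard space
below, every such operand addresses within the segment's usable space
or its guard space. -/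
theorem segment_operand_bound
    (seg : ℤ) (base index scale : ℕ) (disp : ℤ)
    (hbase : base < 2 ^ 32) (hindex : index < 2 ^ 32)
    (hscale : scale = 1 ∨ scale = 2 ∨ scale = 4 ∨ scale = 8)
    (hdisp₁ : -2 ^ 31 ≤ disp) (hdisp₂ : disp < 2 ^ 31) :
    (seg - 2 ^ 31 ≤ seg + (base : ℤ) + (index : ℤ) * (scale : ℤ) + disp ∧
      seg + (base : ℤ) + (index : ℤ) * (scale : ℤ) + disp <
        seg + 2 ^ 32 + 8 * 2 ^ 32 + 2 ^ 31) ∧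
    (seg - 2 * 2 ^ 30 ≤ seg + (base : ℤ) + (index : ℤ) * (scale : ℤ) + disp ∧
      seg + (base : ℤ) + (index : ℤ) * (scale : ℤ) + disp <
        seg + 38 * 2 ^ 30) ∧
    -- usable space, guard space above, or guard space below
    ((seg ≤ seg + (base : ℤ) + (index : ℤ) * (scale : ℤ) + disp ∧
        seg + (base : ℤ) + (index : ℤ) * (scale : ℤ) + disp < seg + 2 ^ 32) ∨
      (seg + 2 ^ 32 ≤ seg + (base : ℤ) + (index : ℤ) * (scale : ℤ) + disp ∧
        seg + (base : ℤ) + (index : ℤ) * (scale : ℤ) + disp <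
          seg + 2 ^ 32 + 36 * 2 ^ 30) ∨
      (seg - 2 * 2 ^ 30 ≤ seg + (base : ℤ) + (index : ℤ) * (scale : ℤ) + disp ∧
        seg + (base : ℤ) + (index : ℤ) * (scale : ℤ) + disp < seg)) := by
  have hscale_le : scale ≤ 8 := by omega
  have hlower := neg_le_operand_offset base index scale hdisp₁
  have hupper := operand_offset_lt hbase hindex hscale_le hdisp₂
  push_cast at hupper
  omega
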